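/- The 6-dimensional complex algebra N⁶₂₇, with basis e₁,...,e₆ and nonzero products e₁e₁ = e₂, e₁e₃ = e₄, e₁e₄ = 2e₅, e₁e₅ = 3e₆, e₂e₁ = e₃, e₂e₃ = -e₅, e₂e₄ = -2e₆, e₃e₁ = -e₄, e₃e₃ = e₆, e₄e₁ = -e₅, e₅e₁ = -e₆, is a Novikov algebra generated by e₁ whose annihilator is the one-dimensional span of e₆. -/
import Mathlib

noncomputable def mulN627 (a b : Fin 6 → ℂ) : Fin 6 → ℂ :=
  ![0, a 0 * b 0, a 1 * b 0,
    a 0 * b 2 - a 2 * b 0,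
    2 * (a 0 * b 3) - a 1 * b 2 - a 3 * b 0,
    3 * (a 0 * b 4) - 2 * (a 1 * b 3) + a 2 * b 2 - a 4 * b 0]

private lemma cv5 {α : Type*} (a b c d e f : α) : ![a,b,c,d,e,f] 5 = f := rfl

/-- `N⁶₂₇` is a Novikov algebra generated by `e₁`, and its annihilator is the
one-dimensional span of `e₆`. -/
theorem N627_novikov_one_generated_annihilator :
    (∀ x y z : Fin 6 → ℂ,
      mulN627 (mulN627 x y) z = mulN627 (mulN627 x z) y ∧
      mulN627 (mulN627 x y) z - mulN627 x (mulN627 y z)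
        = mulN627 (mulN627 y x) z - mulN627 y (mulN627 x z)) ∧
    (∀ S : Submodule ℂ (Fin 6 → ℂ),
      (Pi.single 0 1 : Fin 6 → ℂ) ∈ S →
      (∀ x ∈ S, ∀ y ∈ S, mulN627 x y ∈ S) → S = ⊤) ∧
    {x : Fin 6 → ℂ | ∀ y : Fin 6 → ℂ, mulN627 x y = 0 ∧ mulN627 y x = 0}
      = ↑(Submodule.span ℂ ({Pi.single 5 1} : Set (Fin 6 → ℂ))) := by
  refine ⟨fun x y z => ⟨?_, ?_⟩, ?_, ?_⟩
  · funext i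
    fin_cases i <;> simp [mulN627, cv5] <;> first | ring1 | (left; ring1)
  · funext i
    fin_cases i <;> simp [mulN627, cv5] <;> first | ring1 | (left; ring1)
  · intro S h1 hmul
    have key : ∀ i : Fin 6, (Pi.single i 1 : Fin 6 → ℂ) ∈ S := by
      have h2 : (Pi.single 1 1 : Fin 6 → ℂ) ∈ S := by
        have := hmul _ h1 _ h1
        convert this using 1
        funext i
        fin_cases i <;> simp [mulN627, Pi.single_apply, cv5]
      have h3 : (Pi.single 2 1 : Fin 6 → ℂ) ∈ S := by
        have := hmul _ h2 _ h1
        convert this using 1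
        funext i
        fin_cases i <;> simp [mulN627, Pi.single_apply, cv5]
      have h4 : (Pi.single 3 1 : Fin 6 → ℂ) ∈ S := by
        have := hmul _ h1 _ h3
        convert this using 1
        funext i
        fin_cases i <;> simp [mulN627, Pi.single_apply, cv5]
      have h5 : (Pi.single 4 1 : Fin 6 → ℂ) ∈ S := by
        have := S.smul_mem (1/2 : ℂ) (hmul _ h1 _ h4)
        convert this using 1
        funext i
        fin_cases i <;>
          simp [mulN627, Pi.single_apply, cv5] <;> norm_num
      have h6 : (Pi.single 5 1 : Fin 6 → ℂ) ∈ S := by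
        have := S.smul_mem (1/3 : ℂ) (hmul _ h1 _ h5)
        convert this using 1
        funext i
        fin_cases i <;>
          simp [mulN627, Pi.single_apply, cv5] <;> norm_num
      intro i; fin_cases i <;> assumption
    rw [Submodule.eq_top_iff']
    intro x
    have hx : x = ∑ i : Fin 6, x i • (Pi.single i 1 : Fin 6 → ℂ) := by
      funext j
      simp [Pi.single_apply, Finset.sum_apply]
    rw [hx]
    exact Submodule.sum_mem _ fun i _ => S.smul_mem _ (key i)
  · ext x
    simp only [Set.mem_setOf_eq, SetLike.mem_coe, Submodule.mem_span_singleton]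
    constructor
    · intro h
      have he := (h (Pi.single 0 1)).1
      have h0 : x 0 = 0 := by
        have := congrFun he 1
        simpa [mulN627, Pi.single_apply, cv5] using this
      have h1 : x 1 = 0 := by
        have := congrFun he 2
        simpa [mulN627, Pi.single_apply, cv5] using this
      have h2 : x 2 = 0 := by
        have := congrFun he 3
        simpa [mulN627, Pi.single_apply, cv5, h0] using this
      have h3 : x 3 = 0 := by
        have := congrFun he 4
        simpa [mulN627, Pi.single_apply, cv5, h0, h1] using this
      have h4 : x 4 = 0 := by
        have := congrFun he 5
        simpa [mulN627, Pi.single_apply, cv5, h0, h1, h2, h3] using this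
      refine ⟨x 5, ?_⟩
      funext j
      fin_cases j <;> simp [Pi.single_apply, h0, h1, h2, h3, h4]
    · rintro ⟨c, rfl⟩ y
      constructor <;> funext j <;> fin_cases j <;>
        simp [mulN627, Pi.single_apply, cv5]
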